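/- arXiv:2604.27566 — 2 statements merged into one kernel-verified Lean document; each statement's English description precedes it below -/
import Mathlib

section
/- Let 𝒞 be an abelian category and let n ≥ 1 be an integer. Then the following two conditions are equivalent: (1) for every object M of 𝒞 and every short exact sequence 0 → A → B → C → 0 in 𝒞, the induced map Ext^n_𝒞(B,M) → Ext^n_𝒞(A,M) is surjective (i.e., the contravariant functor Ext^n_𝒞(−,M) is right exact for every M); (2) Ext^{n+1}_𝒞(A,M) = 0 for every pair of objects (A,M) of 𝒞. -/
/-!
An `Ext^(m+1)` class is effaceable: it dies after pullback along some epimorphism `B ↠ A`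
(represent it as a roof `A ← K → M[m+1]` with `K` concentrated in degrees `≤ 0` and take
`B = K⁰`). Given `e ∈ Ext^(n+1)(A, M)`, put it in the long exact sequence of
`0 → ker p → B → A → 0`: since `p^* e = 0`, `e = δ y` for some `y ∈ Ext^n(ker p, M)`, and if
`Ext^n(-, M)` is right exact, `y` extends to `B`, so `e = δ (ι^* z) = 0`. Conversely, the same
long exact sequence shows that the cokernel of `Ext^n(B, M) → Ext^n(A, M)` embeds in
`Ext^(n+1)(C, M)`.
-/

open CategoryTheory CategoryTheory.Abelian CategoryTheory.Limits

universe w v u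

namespace CochainComplex

open HomologicalComplex

variable {C : Type u} [Category.{v} C] [Abelian C]

lemma epi_f_comp_singleObjXSelf_hom_of_quasiIsoAt {A : C} {K : CochainComplex C ℤ} {i : ℤ}
    (π : K ⟶ (single C (ComplexShape.up ℤ) i).obj A) [K.IsStrictlyLE i] [QuasiIsoAt π i] :
    Epi (π.f i ≫ (singleObjXSelf (ComplexShape.up ℤ) i A).hom) := by
  let e := K.iCyclesIso i (i + 1) (by simp)
    ((K.isZero_of_isStrictlyLE i (i + 1) (by simp)).eq_of_tgt _ _)
  have : π.f i ≫ (singleObjXSelf (ComplexShape.up ℤ) i A).hom =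
      e.inv ≫ K.homologyπ i ≫ homologyMap π i ≫ (singleObjHomologySelfIso _ _ _).hom := by
    rw [← cancel_epi e.hom, Iso.hom_inv_id_assoc, iCyclesIso_hom, homologyπ_naturality_assoc,
      homologyπ_singleObjHomologySelfIso_hom, singleObjCyclesSelfIso_hom, cyclesMap_i_assoc]
  rw [this]
  infer_instance

end CochainComplex

namespace DerivedCategory

open HomologicalComplex

variable {C : Type u} [Category.{v} C] [Abelian C] [HasDerivedCategory.{w} C]

lemma exists_epi_single_map_comp_eq_zero {A : C} {L : CochainComplex C ℤ} {i n : ℤ}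
    (hn : n < i) [L.IsStrictlyLE n]
    (φ : Q.obj ((single C (ComplexShape.up ℤ) i).obj A) ⟶ Q.obj L) :
    ∃ (B : C) (p : B ⟶ A), Epi p ∧
      Q.map ((single C (ComplexShape.up ℤ) i).map p) ≫ φ = 0 := by
  obtain ⟨K, _, π, hπ, g, rfl⟩ := right_fac_of_isStrictlyLE φ i
  have : QuasiIsoAt π i := by
    rw [isIso_Q_map_iff_quasiIso] at hπ
    infer_instance
  let t : (single C (ComplexShape.up ℤ) i).obj (K.X i) ⟶ K :=
    mkHomFromSingle (𝟙 _) (by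
      rintro _ rfl
      exact (K.isZero_of_isStrictlyLE i (i + 1) (by simp)).eq_of_tgt _ _)
  have ht : (single C (ComplexShape.up ℤ) i).map
      (π.f i ≫ (singleObjXSelf (ComplexShape.up ℤ) i A).hom) = t ≫ π := by
    apply from_single_hom_ext
    simp [t, mkHomFromSingle_f, single_map_f_self]
  have htg : t ≫ g = 0 :=
    from_single_hom_ext ((L.isZero_of_isStrictlyLE n i hn).eq_of_tgt _ _)
  refine ⟨K.X i, _, CochainComplex.epi_f_comp_singleObjXSelf_hom_of_quasiIsoAt π, ?_⟩
  rw [ht, Q.map_comp, Category.assoc, IsIso.hom_inv_id_assoc, ← Q.map_comp, htg, Q.map_zero]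

end DerivedCategory

namespace CategoryTheory.Abelian.Ext

variable {C : Type u} [Category.{v} C] [Abelian C] [HasExt.{w} C]

open _root_.DerivedCategory in
lemma exists_epi_mk₀_comp_eq_zero {A M : C} {m : ℕ} (e : Ext A M (m + 1)) :
    ∃ (B : C) (p : B ⟶ A), Epi p ∧ (mk₀ p).comp e (zero_add _) = 0 := by
  let := HasDerivedCategory.standard C
  let shift := (singleFunctors C).shiftIso (m + 1) (-(m + 1)) 0 (by lia)
  obtain ⟨B, p, hp, h⟩ := exists_epi_single_map_comp_eq_zero
    (L := (CochainComplex.singleFunctor C (-(m + 1))).obj M) (n := -(m + 1)) (i := 0) (by lia)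
    (e.hom ≫ shift.hom.app M)
  refine ⟨B, p, hp, ext ?_⟩
  rw [comp_hom, mk₀_hom, ShiftedHom.mk₀_comp, zero_hom, ← cancel_mono (shift.hom.app M),
    Limits.zero_comp, Category.assoc]
  exact h

end CategoryTheory.Abelian.Ext

theorem stmt_1_general {C : Type u} [Category.{v} C] [Abelian C] [HasExt.{w} C]
    (n : ℕ) :
    (∀ (M : C) (S : ShortComplex C), S.ShortExact →
      Function.Surjective
        (fun e : Ext S.X₂ M n => (Ext.mk₀ S.f).comp e (zero_add n))) ↔
    (∀ (A M : C) (e : Ext A M (n + 1)), e = 0) := by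
  constructor
  · intro h A M e
    obtain ⟨B, p, hp, hpe⟩ := Ext.exists_epi_mk₀_comp_eq_zero e
    have hS : (ShortComplex.mk (kernel.ι p) p (kernel.condition p)).ShortExact :=
      { exact := ShortComplex.exact_of_f_is_kernel _ (kernelIsKernel p) }
    obtain ⟨y, rfl⟩ := Ext.contravariant_sequence_exact₃ hS M e hpe (add_comm 1 n)
    obtain ⟨z, rfl⟩ := h M _ hS y
    exact hS.extClass_comp_assoc z
  · intro h M S hS x
    exact Ext.contravariant_sequence_exact₁ hS M x (add_comm 1 n) (h _ _ _)

/-- Theorem (Yoneda Ext criterion, contravariant form): in an abelian category `C`,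
for `n ≥ 1`, the contravariant functor `Ext^n(-, M)` is right exact for every `M`
(i.e. for every short exact sequence `0 → A → B → C → 0`, the induced map
`Ext^n(B, M) → Ext^n(A, M)` is surjective) if and only if `Ext^(n+1)(A, M) = 0`
for all objects `A`, `M`. -/
theorem stmt_1 {C : Type u} [Category.{v} C] [Abelian C] [HasExt.{w} C]
    (n : ℕ) (hn : 1 ≤ n) :
    (∀ (M : C) (S : ShortComplex C), S.ShortExact →
      Function.Surjective
        (fun e : Ext S.X₂ M n => (Ext.mk₀ S.f).comp e (zero_add n))) ↔
    (∀ (A M : C) (e : Ext A M (n + 1)), e = 0) :=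
  stmt_1_general n
end

section
/- Let 𝒞 be an abelian category and let n ≥ 1 be an integer. Then the following two conditions are equivalent: (1) for every object M of 𝒞 and every short exact sequence 0 → A → B → C → 0 in 𝒞, the induced map Ext^n_𝒞(M,B) → Ext^n_𝒞(M,C) is surjective; (2) for every object M of 𝒞 and every short exact sequence 0 → A → B → C → 0 in 𝒞, the induced map Ext^n_𝒞(B,M) → Ext^n_𝒞(A,M) is surjective. -/
/-!
Both conditions are equivalent to the vanishing of `Ext^{n+1}` on all pairs of objects.
By the long exact sequences, vanishing of `Ext^{n+1}` makes the maps in question surjective.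
Conversely, every class `ξ ∈ Ext^{n+1}(X, Y)` is killed by postcomposition with some
monomorphism `Y ⟶ E`: represent `ξ` by a roof `X[0] ⟶ L ⟵ Y[n+1]` of complexes, the right leg a
quasi-isomorphism, and let `E` be the opcycles of `L` in degree `-(n+1)`. The map `Y ⟶ E` is
mono since it factors as an isomorphism onto the homology followed by the inclusion of homology
into opcycles, and the left leg dies in `E` because `X[0]` vanishes in degree `-(n+1)`. Hence
`ξ` is the image of a class in `Ext^n(X, E/Y)` under the connecting map of
`0 → Y → E → E/Y → 0`, and surjectivity of `Ext^n(X, E) → Ext^n(X, E/Y)` makes that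
connecting map zero. Dually, `ξ` is killed by precomposition with an epimorphism `E ⟶ X`, which
handles the contravariant condition.
-/

open CategoryTheory CategoryTheory.Abelian

universe w v u

section

open CategoryTheory.Limits HomologicalComplex

variable {C : Type u} [Category.{v} C] [Abelian C]

namespace CochainComplex

lemma exists_epi_of_quasiIsoAt_to_single {K : CochainComplex C ℤ} {X : C} {a : ℤ}
    (s : K ⟶ (single C (ComplexShape.up ℤ) a).obj X) [QuasiIsoAt s a] :
    ∃ (E : C) (p : E ⟶ X) (ι : (single C (ComplexShape.up ℤ) a).obj E ⟶ K),
      Epi p ∧ ι ≫ s = (single C (ComplexShape.up ℤ) a).map p := by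
  let p := K.iCycles a ≫ s.f a ≫ (singleObjXSelf (ComplexShape.up ℤ) a X).hom
  have hp : K.homologyπ a ≫ homologyMap s a ≫
      (singleObjHomologySelfIso (ComplexShape.up ℤ) a X).hom = p := by
    rw [homologyπ_naturality_assoc, homologyπ_singleObjHomologySelfIso_hom,
      singleObjCyclesSelfIso_hom, cyclesMap_i_assoc]
  refine ⟨K.cycles a, p, mkHomFromSingle (K.iCycles a) (fun k _ => K.iCycles_d a k), ?_, ?_⟩
  · rw [← hp]
    infer_instance
  · apply from_single_hom_ext
    simp [p, single_map_f_self]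

lemma exists_mono_of_quasiIsoAt_from_single {K : CochainComplex C ℤ} {Y : C} {a : ℤ}
    (s : (single C (ComplexShape.up ℤ) a).obj Y ⟶ K) [QuasiIsoAt s a] :
    ∃ (E : C) (i : Y ⟶ E) (π : K ⟶ (single C (ComplexShape.up ℤ) a).obj E),
      Mono i ∧ s ≫ π = (single C (ComplexShape.up ℤ) a).map i := by
  let i := (singleObjXSelf (ComplexShape.up ℤ) a Y).inv ≫ s.f a ≫ K.pOpcycles a
  have hi : (singleObjHomologySelfIso (ComplexShape.up ℤ) a Y).inv ≫
      homologyMap s a ≫ K.homologyι a = i := by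
    rw [homologyι_naturality, singleObjHomologySelfIso_inv_homologyι_assoc,
      singleObjOpcyclesSelfIso_hom, Category.assoc, p_opcyclesMap]
  refine ⟨K.opcycles a, i, mkHomToSingle (K.pOpcycles a) (fun k _ => K.d_pOpcycles k a), ?_, ?_⟩
  · rw [← hi]
    infer_instance
  · apply to_single_hom_ext
    simp [i, single_map_f_self]

end CochainComplex

namespace DerivedCategory

variable [HasDerivedCategory.{w} C]

lemma exists_epi_Q_map_single_map_comp_eq_zero {X Y : C} {a b : ℤ} (hab : a ≠ b)
    (f : Q.obj ((single C (ComplexShape.up ℤ) a).obj X) ⟶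
      Q.obj ((single C (ComplexShape.up ℤ) b).obj Y)) :
    ∃ (E : C) (p : E ⟶ X), Epi p ∧ Q.map ((single C (ComplexShape.up ℤ) a).map p) ≫ f = 0 := by
  obtain ⟨K, s, hs, g, rfl⟩ := right_fac f
  rw [isIso_Q_map_iff_quasiIso] at hs
  obtain ⟨E, p, ι, hp, hι⟩ := CochainComplex.exists_epi_of_quasiIsoAt_to_single s
  have hιg : ι ≫ g = 0 := from_single_hom_ext
    ((isZero_single_obj_X (ComplexShape.up ℤ) b Y a hab).eq_of_tgt _ _)
  refine ⟨E, p, hp, ?_⟩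
  rw [← hι, Q.map_comp, Category.assoc, IsIso.hom_inv_id_assoc, ← Q.map_comp, hιg, Q.map_zero]

lemma exists_mono_comp_Q_map_single_map_eq_zero {X Y : C} {a b : ℤ} (hab : a ≠ b)
    (f : Q.obj ((single C (ComplexShape.up ℤ) a).obj X) ⟶
      Q.obj ((single C (ComplexShape.up ℤ) b).obj Y)) :
    ∃ (E : C) (i : Y ⟶ E), Mono i ∧ f ≫ Q.map ((single C (ComplexShape.up ℤ) b).map i) = 0 := by
  obtain ⟨K, g, s, hs, rfl⟩ := left_fac f
  rw [isIso_Q_map_iff_quasiIso] at hs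
  obtain ⟨E, i, π, hi, hπ⟩ := CochainComplex.exists_mono_of_quasiIsoAt_from_single s
  have hgπ : g ≫ π = 0 := to_single_hom_ext
    ((isZero_single_obj_X (ComplexShape.up ℤ) a X b hab.symm).eq_of_src _ _)
  refine ⟨E, i, hi, ?_⟩
  rw [← hπ, Q.map_comp, Category.assoc, IsIso.inv_hom_id_assoc, ← Q.map_comp, hgπ, Q.map_zero]

end DerivedCategory

namespace CategoryTheory.Abelian.Ext

variable [HasExt.{w} C]

lemma exists_epi_mk₀_comp_eq_zero_s14 {X Y : C} {n : ℕ} (hn : n ≠ 0) (α : Ext X Y n) :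
    ∃ (E : C) (p : E ⟶ X), Epi p ∧ (mk₀ p).comp α (zero_add n) = 0 := by
  let := HasDerivedCategory.standard C
  let e := (DerivedCategory.singleFunctors C).shiftIso (n : ℤ) (-(n : ℤ)) 0 (by omega)
  obtain ⟨E, p, hp, h⟩ := DerivedCategory.exists_epi_Q_map_single_map_comp_eq_zero
    (by omega : (0 : ℤ) ≠ -n) (α.hom ≫ e.hom.app Y)
  refine ⟨E, p, hp, Ext.ext ?_⟩
  rw [← singleFunctor_map_comp_hom, zero_hom, ← cancel_mono (e.hom.app Y), Limits.zero_comp,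
    Category.assoc]
  exact h

lemma exists_mono_comp_mk₀_eq_zero {X Y : C} {n : ℕ} (hn : n ≠ 0) (α : Ext X Y n) :
    ∃ (E : C) (i : Y ⟶ E), Mono i ∧ α.comp (mk₀ i) (add_zero n) = 0 := by
  let := HasDerivedCategory.standard C
  let e := (DerivedCategory.singleFunctors C).shiftIso (n : ℤ) (-(n : ℤ)) 0 (by omega)
  obtain ⟨E, i, hi, h⟩ := DerivedCategory.exists_mono_comp_Q_map_single_map_eq_zero
    (by omega : (0 : ℤ) ≠ -n) (α.hom ≫ e.hom.app Y)
  refine ⟨E, i, hi, Ext.ext ?_⟩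
  rw [← hom_comp_singleFunctor_map_shift, zero_hom, ← cancel_mono (e.hom.app E), Limits.zero_comp,
    Category.assoc, ← Functor.comp_map, e.hom.naturality i, ← Category.assoc]
  exact h

theorem comp_mk₀_g_surjective_iff_subsingleton_succ (n : ℕ) :
    (∀ (M : C) (S : ShortComplex C), S.ShortExact →
      Function.Surjective (fun e : Ext M S.X₂ n => e.comp (mk₀ S.g) (add_zero n))) ↔
    ∀ X Y : C, Subsingleton (Ext X Y (n + 1)) := by
  constructor
  · intro h X Y
    refine subsingleton_of_forall_eq 0 fun ξ => ?_
    obtain ⟨E, i, _, hξ⟩ := exists_mono_comp_mk₀_eq_zero n.succ_ne_zero ξ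
    have hT : (ShortComplex.mk i (cokernel.π i) (cokernel.condition i)).ShortExact :=
      { exact := ShortComplex.exact_cokernel i }
    obtain ⟨ζ, rfl⟩ := covariant_sequence_exact₁ X hT ξ hξ rfl
    obtain ⟨ε, rfl⟩ := h X _ hT ζ
    rw [comp_assoc_of_second_deg_zero, hT.comp_extClass, comp_zero]
  · intro h M S hS ξ
    exact covariant_sequence_exact₃ M hS ξ rfl (Subsingleton.elim _ _)

theorem mk₀_f_comp_surjective_iff_subsingleton_succ (n : ℕ) :
    (∀ (M : C) (S : ShortComplex C), S.ShortExact →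
      Function.Surjective (fun e : Ext S.X₂ M n => (mk₀ S.f).comp e (zero_add n))) ↔
    ∀ X Y : C, Subsingleton (Ext X Y (n + 1)) := by
  constructor
  · intro h X Y
    refine subsingleton_of_forall_eq 0 fun ξ => ?_
    obtain ⟨E, p, _, hξ⟩ := exists_epi_mk₀_comp_eq_zero_s14 n.succ_ne_zero ξ
    have hT : (ShortComplex.mk (kernel.ι p) p (kernel.condition p)).ShortExact :=
      { exact := ShortComplex.exact_kernel p }
    obtain ⟨ζ, rfl⟩ := contravariant_sequence_exact₃ hT Y ξ hξ (add_comm 1 n)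
    obtain ⟨ε, rfl⟩ := h Y _ hT ζ
    exact hT.extClass_comp_assoc ε
  · intro h M S hS ξ
    exact contravariant_sequence_exact₁ hS M ξ (add_comm 1 n) (Subsingleton.elim _ _)

end CategoryTheory.Abelian.Ext

end

theorem stmt_14_general {C : Type u} [Category.{v} C] [Abelian C] [HasExt.{w} C]
    (n : ℕ) :
    (∀ (M : C) (S : ShortComplex C), S.ShortExact →
      Function.Surjective
        (fun e : Ext M S.X₂ n => e.comp (Ext.mk₀ S.g) (add_zero n))) ↔
    (∀ (M : C) (S : ShortComplex C), S.ShortExact →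
      Function.Surjective
        (fun e : Ext S.X₂ M n => (Ext.mk₀ S.f).comp e (zero_add n))) := by
  rw [Ext.comp_mk₀_g_surjective_iff_subsingleton_succ,
    Ext.mk₀_f_comp_surjective_iff_subsingleton_succ]

/-- For an abelian category `C` and `n ≥ 1`, the covariant functors `Ext^n(M, -)`
are right exact for all `M` if and only if the contravariant functors `Ext^n(-, M)`
are right exact for all `M`. -/
theorem stmt_14 {C : Type u} [Category.{v} C] [Abelian C] [HasExt.{w} C]
    (n : ℕ) (hn : 1 ≤ n) :
    (∀ (M : C) (S : ShortComplex C), S.ShortExact →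
      Function.Surjective
        (fun e : Ext M S.X₂ n => e.comp (Ext.mk₀ S.g) (add_zero n))) ↔
    (∀ (M : C) (S : ShortComplex C), S.ShortExact →
      Function.Surjective
        (fun e : Ext S.X₂ M n => (Ext.mk₀ S.f).comp e (zero_add n))) :=
  stmt_14_general n
end
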